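/- (Layer-agnostic bound, Corollary 6) Suppose a hypothesis h decomposes as h = f_i ∘ g_i for each i in a finite nonempty index set I, with f_i ∈ F_i, g_i ∈ G_i. Then R_T(h) ≤ R_S(h) + min_{i ∈ I} { d_{F_iΔF_i}(p_S^{g_i}, p_T^{g_i}) + d_{F_i,{G_iΔG_i}}(p_S, p_T) + λ_{F_i G_i}(g_i) }, where λ_{FG}(g) = inf_{f' ∈ F, g' ∈ G}[2R_S(f'g) + R_S(f'g') + R_T(f'g')]. -/

import Mathlib

open MeasureTheory

/-- Zero-one loss on binary labels. -/
noncomputable def zoLoss (a b : Bool) : ℝ := if a = b then 0 else 1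

/-- Expected disagreement between two binary hypotheses under a distribution on `X`. -/
noncomputable def riskD {X : Type*} [MeasurableSpace X] (μ : Measure X)
    (h h' : X → Bool) : ℝ := ∫ x, zoLoss (h x) (h' x) ∂μ

/-- Risk of a hypothesis against true labels, for a joint distribution on `X × Bool`. -/
noncomputable def riskJ {X : Type*} [MeasurableSpace X] (μ : Measure (X × Bool))
    (h : X → Bool) : ℝ := ∫ p, zoLoss (h p.1) p.2 ∂μ

/-- The `HΔH`-divergence between two distributions on `X`. -/
noncomputable def hDiv {X : Type*} [MeasurableSpace X] (μ ν : Measure X)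
    (H : Set (X → Bool)) : ℝ :=
  sSup {r | ∃ h ∈ H, ∃ h' ∈ H, r = |riskD μ h h' - riskD ν h h'|}

/-- The `F_{GΔG}`-divergence between two distributions on `X`. -/
noncomputable def fggDiv {X Z : Type*} [MeasurableSpace X] (μ ν : Measure X)
    (F : Set (Z → Bool)) (G : Set (X → Z)) : ℝ :=
  sSup {r | ∃ f ∈ F, ∃ g ∈ G, ∃ g' ∈ G,
    r = |riskD μ (f ∘ g) (f ∘ g') - riskD ν (f ∘ g) (f ∘ g')|}

/-!
The target risk of `h = f ∘ g` is compared with the source risk through an arbitrary reference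
hypothesis `f' ∘ g'`, passing through the intermediate hypothesis `f' ∘ g` which shares the
embedding of `h`. The disagreement of `h` and `f' ∘ g` is a disagreement of `f` and `f'` on the
latent space, so it moves from target to source at the cost of the `FΔF`-divergence of the
pushforwards along `g`; the disagreement of `f' ∘ g` and `f' ∘ g'` moves at the cost of the
`F_{GΔG}`-divergence. The remaining source disagreements are bounded by source risks, and taking
the infimum over `(f', g')` and then the minimum over the layers gives the bound.
-/

section ZeroOneLoss

lemma zoLoss_nonneg (a b : Bool) : 0 ≤ zoLoss a b := by
  unfold zoLoss; split <;> norm_num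

lemma zoLoss_le_one (a b : Bool) : zoLoss a b ≤ 1 := by
  unfold zoLoss; split <;> norm_num

lemma zoLoss_comm (a b : Bool) : zoLoss a b = zoLoss b a := by
  cases a <;> cases b <;> rfl

lemma zoLoss_triangle (a b c : Bool) : zoLoss a c ≤ zoLoss a b + zoLoss b c := by
  cases a <;> cases b <;> cases c <;> norm_num [zoLoss]

variable {α : Type*} [MeasurableSpace α] {u v : α → Bool}

lemma Measurable.zoLoss (hu : Measurable u) (hv : Measurable v) :
    Measurable fun x => zoLoss (u x) (v x) :=
  (measurable_of_countable fun p : Bool × Bool => _root_.zoLoss p.1 p.2).comp (hu.prodMk hv)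

lemma integrable_zoLoss (μ : Measure α) [IsFiniteMeasure μ] (hu : Measurable u)
    (hv : Measurable v) : Integrable (fun x => zoLoss (u x) (v x)) μ :=
  .of_bound (hu.zoLoss hv).aestronglyMeasurable 1 <| .of_forall fun x => by
    rw [Real.norm_of_nonneg (zoLoss_nonneg _ _)]
    exact zoLoss_le_one _ _

end ZeroOneLoss

section Risk

variable {α : Type*} [MeasurableSpace α] {u v w : α → Bool}

lemma riskD_nonneg (μ : Measure α) (u v : α → Bool) : 0 ≤ riskD μ u v :=
  integral_nonneg fun _ => zoLoss_nonneg _ _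

lemma riskD_le_one (μ : Measure α) [IsProbabilityMeasure μ] (hu : Measurable u)
    (hv : Measurable v) : riskD μ u v ≤ 1 := by
  refine (integral_mono (integrable_zoLoss μ hu hv) (integrable_const (1 : ℝ))
    fun x => zoLoss_le_one (u x) (v x)).trans_eq ?_
  simp

lemma riskD_comm (μ : Measure α) (u v : α → Bool) : riskD μ u v = riskD μ v u := by
  simp only [riskD, zoLoss_comm (u _)]

lemma riskD_triangle (μ : Measure α) [IsFiniteMeasure μ] (hu : Measurable u)
    (hv : Measurable v) (hw : Measurable w) : riskD μ u w ≤ riskD μ u v + riskD μ v w := by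
  unfold riskD
  rw [← integral_add (integrable_zoLoss μ hu hv) (integrable_zoLoss μ hv hw)]
  exact integral_mono (integrable_zoLoss μ hu hw)
    ((integrable_zoLoss μ hu hv).add (integrable_zoLoss μ hv hw)) fun _ => zoLoss_triangle _ _ _

lemma riskD_map {β : Type*} [MeasurableSpace β] (μ : Measure α) {g : α → β} (hg : Measurable g)
    {u v : β → Bool} (hu : Measurable u) (hv : Measurable v) :
    riskD (μ.map g) u v = riskD μ (u ∘ g) (v ∘ g) :=
  integral_map hg.aemeasurable (hu.zoLoss hv).aestronglyMeasurable

lemma riskJ_eq_riskD (μ : Measure (α × Bool)) (h : α → Bool) :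
    riskJ μ h = riskD μ (h ∘ Prod.fst) Prod.snd :=
  rfl

lemma riskJ_le_riskJ_add_riskD (μ : Measure (α × Bool)) [IsFiniteMeasure μ]
    (hu : Measurable u) (hv : Measurable v) :
    riskJ μ u ≤ riskJ μ v + riskD (μ.map Prod.fst) u v := by
  rw [riskJ_eq_riskD, riskJ_eq_riskD, riskD_map μ measurable_fst hu hv, add_comm (riskD _ _ _)]
  exact riskD_triangle μ (hu.comp measurable_fst) (hv.comp measurable_fst) measurable_snd

lemma riskD_map_fst_le_riskJ_add_riskJ (μ : Measure (α × Bool)) [IsFiniteMeasure μ]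
    (hu : Measurable u) (hv : Measurable v) :
    riskD (μ.map Prod.fst) u v ≤ riskJ μ u + riskJ μ v := by
  rw [riskJ_eq_riskD, riskJ_eq_riskD, riskD_map μ measurable_fst hu hv, riskD_comm μ (v ∘ _)]
  exact riskD_triangle μ (hu.comp measurable_fst) measurable_snd (hv.comp measurable_fst)

end Risk

section Divergence

variable {X Z : Type*} [MeasurableSpace X] [MeasurableSpace Z] {μ ν : Measure X}
  [IsProbabilityMeasure μ] [IsProbabilityMeasure ν]

lemma abs_riskD_sub_riskD_le_one {u v : X → Bool} (hu : Measurable u) (hv : Measurable v) :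
    |riskD μ u v - riskD ν u v| ≤ 1 :=
  abs_sub_le_of_nonneg_of_le (riskD_nonneg μ u v) (riskD_le_one μ hu hv)
    (riskD_nonneg ν u v) (riskD_le_one ν hu hv)

lemma riskD_le_riskD_add_hDiv {H : Set (X → Bool)} (hH : ∀ h ∈ H, Measurable h)
    {u v : X → Bool} (hu : u ∈ H) (hv : v ∈ H) :
    riskD ν u v ≤ riskD μ u v + hDiv μ ν H := by
  have hbdd : BddAbove {r | ∃ h ∈ H, ∃ h' ∈ H, r = |riskD μ h h' - riskD ν h h'|} := by
    refine ⟨1, ?_⟩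
    rintro r ⟨h, hh, h', hh', rfl⟩
    exact abs_riskD_sub_riskD_le_one (hH h hh) (hH h' hh')
  have : |riskD μ u v - riskD ν u v| ≤ hDiv μ ν H := le_csSup hbdd ⟨u, hu, v, hv, rfl⟩
  linarith [neg_abs_le (riskD μ u v - riskD ν u v)]

lemma riskD_le_riskD_add_fggDiv {F : Set (Z → Bool)} {G : Set (X → Z)}
    (hF : ∀ f ∈ F, Measurable f) (hG : ∀ g ∈ G, Measurable g)
    {f : Z → Bool} {g g' : X → Z} (hf : f ∈ F) (hg : g ∈ G) (hg' : g' ∈ G) :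
    riskD ν (f ∘ g) (f ∘ g') ≤ riskD μ (f ∘ g) (f ∘ g') + fggDiv μ ν F G := by
  have hbdd : BddAbove {r | ∃ f ∈ F, ∃ g ∈ G, ∃ g' ∈ G,
      r = |riskD μ (f ∘ g) (f ∘ g') - riskD ν (f ∘ g) (f ∘ g')|} := by
    refine ⟨1, ?_⟩
    rintro r ⟨f, hf, g, hg, g', hg', rfl⟩
    exact abs_riskD_sub_riskD_le_one ((hF f hf).comp (hG g hg)) ((hF f hf).comp (hG g' hg'))
  have : |riskD μ (f ∘ g) (f ∘ g') - riskD ν (f ∘ g) (f ∘ g')| ≤ fggDiv μ ν F G :=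
    le_csSup hbdd ⟨f, hf, g, hg, g', hg', rfl⟩
  linarith [neg_abs_le (riskD μ (f ∘ g) (f ∘ g') - riskD ν (f ∘ g) (f ∘ g'))]

end Divergence

section SingleLayer

variable {X Z : Type*} [MeasurableSpace X] [MeasurableSpace Z]
  (pS pT : Measure (X × Bool)) [IsProbabilityMeasure pS] [IsProbabilityMeasure pT]
  {F : Set (Z → Bool)} {G : Set (X → Z)}

/-- The paper's `λ_{FG}(g)`. -/
noncomputable def idealJointRisk (F : Set (Z → Bool)) (G : Set (X → Z)) (g : X → Z) : ℝ :=
  sInf {r | ∃ f' ∈ F, ∃ g' ∈ G,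
    r = 2 * riskJ pS (f' ∘ g) + riskJ pS (f' ∘ g') + riskJ pT (f' ∘ g')}

theorem riskJ_comp_le_of_reference (hF : ∀ f ∈ F, Measurable f) (hG : ∀ g ∈ G, Measurable g)
    {f f' : Z → Bool} {g g' : X → Z} (hf : f ∈ F) (hf' : f' ∈ F) (hg : g ∈ G) (hg' : g' ∈ G) :
    riskJ pT (f ∘ g) ≤ riskJ pS (f ∘ g)
      + hDiv ((pS.map Prod.fst).map g) ((pT.map Prod.fst).map g) F
      + fggDiv (pS.map Prod.fst) (pT.map Prod.fst) F G
      + (2 * riskJ pS (f' ∘ g) + riskJ pS (f' ∘ g') + riskJ pT (f' ∘ g')) := by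
  have := Measure.isProbabilityMeasure_map (μ := pS) measurable_fst.aemeasurable
  have := Measure.isProbabilityMeasure_map (μ := pT) measurable_fst.aemeasurable
  have mg := hG g hg
  have := Measure.isProbabilityMeasure_map (μ := pS.map Prod.fst) mg.aemeasurable
  have := Measure.isProbabilityMeasure_map (μ := pT.map Prod.fst) mg.aemeasurable
  have mf := hF f hf
  have mf' := hF f' hf'
  have mg' := hG g' hg'
  have target_split := riskJ_le_riskJ_add_riskD pT (mf.comp mg) (mf'.comp mg')
  have via_shared_embedding :=
    riskD_triangle (pT.map Prod.fst) (mf.comp mg) (mf'.comp mg) (mf'.comp mg')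
  have latent_shift : riskD (pT.map Prod.fst) (f ∘ g) (f' ∘ g)
      ≤ riskD (pS.map Prod.fst) (f ∘ g) (f' ∘ g)
        + hDiv ((pS.map Prod.fst).map g) ((pT.map Prod.fst).map g) F := by
    rw [← riskD_map _ mg mf mf', ← riskD_map _ mg mf mf']
    exact riskD_le_riskD_add_hDiv hF hf hf'
  have embedding_shift := riskD_le_riskD_add_fggDiv (μ := pS.map Prod.fst)
    (ν := pT.map Prod.fst) hF hG hf' hg hg'
  have source_latent := riskD_map_fst_le_riskJ_add_riskJ pS (mf.comp mg) (mf'.comp mg)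
  have source_embedding := riskD_map_fst_le_riskJ_add_riskJ pS (mf'.comp mg) (mf'.comp mg')
  linarith

theorem riskJ_comp_le (hF : ∀ f ∈ F, Measurable f) (hG : ∀ g ∈ G, Measurable g)
    {f : Z → Bool} {g : X → Z} (hf : f ∈ F) (hg : g ∈ G) :
    riskJ pT (f ∘ g) ≤ riskJ pS (f ∘ g)
      + (hDiv ((pS.map Prod.fst).map g) ((pT.map Prod.fst).map g) F
        + fggDiv (pS.map Prod.fst) (pT.map Prod.fst) F G
        + idealJointRisk pS pT F G g) := by
  rw [← sub_le_iff_le_add', ← sub_le_iff_le_add']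
  refine le_csInf ⟨_, f, hf, g, hg, rfl⟩ ?_
  rintro r ⟨f', hf', g', hg', rfl⟩
  linarith [riskJ_comp_le_of_reference pS pT hF hG hf hf' hg hg']

end SingleLayer

theorem layer_agnostic_bound {X : Type*} [MeasurableSpace X] {ι : Type*}
    (I : Finset ι) (hI : I.Nonempty)
    (Z : ι → Type*) [∀ i, MeasurableSpace (Z i)]
    (pS pT : Measure (X × Bool)) [IsProbabilityMeasure pS] [IsProbabilityMeasure pT]
    (G : ∀ i, Set (X → Z i)) (F : ∀ i, Set (Z i → Bool))
    (hF : ∀ i, ∀ f ∈ F i, Measurable f) (hG : ∀ i, ∀ g ∈ G i, Measurable g)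
    (h : X → Bool) (f : ∀ i, Z i → Bool) (g : ∀ i, X → Z i)
    (hf : ∀ i ∈ I, f i ∈ F i) (hg : ∀ i ∈ I, g i ∈ G i)
    (hdecomp : ∀ i ∈ I, h = (f i) ∘ (g i)) :
    riskJ pT h ≤ riskJ pS h + I.inf' hI (fun i =>
      hDiv ((pS.map Prod.fst).map (g i)) ((pT.map Prod.fst).map (g i)) (F i)
      + fggDiv (pS.map Prod.fst) (pT.map Prod.fst) (F i) (G i)
      + sInf {r | ∃ f' ∈ F i, ∃ g' ∈ G i,
          r = 2 * riskJ pS (f' ∘ g i) + riskJ pS (f' ∘ g') + riskJ pT (f' ∘ g')}) := by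
  rw [← sub_le_iff_le_add']
  refine Finset.le_inf' hI _ fun i hi => ?_
  rw [sub_le_iff_le_add', hdecomp i hi]
  exact riskJ_comp_le pS pT (hF i) (hG i) (hf i hi) (hg i hi)
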